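/- If S ⊆ V is a vertex cover of G (i.e., every edge of G has at least one endpoint in S), then every core element y ∈ core(G_0[Π(S)]) of the induced subgraph G_0[Π(S)] satisfies y_α = 0; hence min_{y ∈ core(G_0[Π(S)])}(1 − y_α) = 1. -/

import Mathlib

/-- A finite graph: a finite vertex set and a finite set of (oriented representatives of) edges. -/
structure FinGraph (α : Type*) where
  verts : Finset α
  edges : Finset (α × α)

namespace FinGraph

variable {α : Type*}

/-- A matching: a set of edges of `G` that are pairwise vertex-disjoint. -/
def IsMatching (G : FinGraph α) (M : Finset (α × α)) : Prop :=
  M ⊆ G.edges ∧ ∀ e ∈ M, ∀ f ∈ M, e ≠ f →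
    e.1 ≠ f.1 ∧ e.1 ≠ f.2 ∧ e.2 ≠ f.1 ∧ e.2 ≠ f.2

open Classical in
/-- `ν(G)`: the maximum cardinality of a matching of `G`. -/
noncomputable def nu (G : FinGraph α) : ℕ :=
  (G.edges.powerset.filter fun M => G.IsMatching M).sup Finset.card

/-- Well-formedness: edges join two distinct vertices of the graph. -/
def WF (G : FinGraph α) : Prop :=
  ∀ e ∈ G.edges, e.1 ∈ G.verts ∧ e.2 ∈ G.verts ∧ e.1 ≠ e.2

/-- `G` is bipartite with parts `V1`, `V2` (edges oriented from `V1` to `V2`). -/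
def Bipartition [DecidableEq α] (G : FinGraph α) (V1 V2 : Finset α) : Prop :=
  G.verts ⊆ V1 ∪ V2 ∧ ∀ e ∈ G.edges, e.1 ∈ V1 ∧ e.2 ∈ V2

/-- The core of the assignment game on `G`: minimum fractional vertex covers of value `ν(G)`. -/
noncomputable def core (G : FinGraph α) : Set (α → ℝ) :=
  {y | (∀ v ∈ G.verts, 0 ≤ y v) ∧ (∀ e ∈ G.edges, 1 ≤ y e.1 + y e.2) ∧
    ∑ v ∈ G.verts, y v = (G.nu : ℝ)}

/-- The subgraph of `G` induced by the vertex set `U`. -/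
def induce [DecidableEq α] (G : FinGraph α) (U : Finset α) : FinGraph α :=
  ⟨G.verts ∩ U, G.edges.filter fun e => e.1 ∈ U ∧ e.2 ∈ U⟩

end FinGraph

/-- A real number is integral if it is an integer. -/
def IntegralReal (x : ℝ) : Prop := ∃ n : ℤ, x = (n : ℝ)

open FinGraph

variable {V : Type*} [Fintype V] [DecidableEq V]

/-- The degree of `v`: the number of edges of `E` containing `v`. -/
def degE (E : Finset (Sym2 V)) (v : V) : ℕ := (E.filter fun e => v ∈ e).card

/-- The vertex universe of the hardness-reduction graph: copies `(v, j)` of original vertices,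
edge-vertices, and three extra vertices `α = redAlpha`, `β₁ = redBeta1`, `β₂ = redBeta2`. -/
abbrev RedVert (V : Type*) : Type _ := (V × ℕ) ⊕ (Sym2 V ⊕ Fin 3)

/-- The copy-vertex `v_j`. -/
def redCopy (v : V) (j : ℕ) : RedVert V := Sum.inl (v, j)

/-- The edge-vertex corresponding to `e`. -/
def redEdgeVert (e : Sym2 V) : RedVert V := Sum.inr (Sum.inl e)

/-- The special vertex `α`. -/
def redAlpha (V : Type*) : RedVert V := Sum.inr (Sum.inr 0)

/-- The special vertex `β₁`. -/
def redBeta1 (V : Type*) : RedVert V := Sum.inr (Sum.inr 1)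

/-- The special vertex `β₂`. -/
def redBeta2 (V : Type*) : RedVert V := Sum.inr (Sum.inr 2)

/-- The hardness-reduction graph `G₀` built from the graph `G = (V, E)`:
vertices are the copies `v_1, …, v_{d_v}` for `v ∈ V`, the edge-vertices `e ∈ E`, and
`α, β₁, β₂`; edges join each edge-vertex `e` to every copy of each endpoint of `e`, and `α`
to every edge-vertex and to `β₁` and `β₂`. -/
def redGraph (E : Finset (Sym2 V)) : FinGraph (RedVert V) where
  verts :=
    (Finset.univ.biUnion fun v : V =>
        (Finset.range (degE E v)).image fun j => redCopy v j)
      ∪ E.image redEdgeVert ∪ {redAlpha V, redBeta1 V, redBeta2 V}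
  edges :=
    (E.biUnion fun e =>
        (Finset.univ.filter fun v : V => v ∈ e).biUnion fun v =>
          (Finset.range (degE E v)).image fun j => (redEdgeVert e, redCopy v j))
      ∪ E.image (fun e => (redAlpha V, redEdgeVert e))
      ∪ {(redAlpha V, redBeta1 V), (redAlpha V, redBeta2 V)}

/-- `Π(S)`: the copies of the vertices of `S`, all edge-vertices, and `α`. -/
def redPi (E : Finset (Sym2 V)) (S : Finset V) : Finset (RedVert V) :=
  (S.biUnion fun v => (Finset.range (degE E v)).image fun j => redCopy v j)
    ∪ E.image redEdgeVert ∪ {redAlpha V}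

/-- `S` is a vertex cover of `(V, E)`. -/
def IsVCover (E : Finset (Sym2 V)) (S : Finset V) : Prop :=
  ∀ e ∈ E, ∃ v ∈ S, v ∈ e

/-!
Matching every edge-vertex `e` with a private copy of a vertex of `S` that covers `e` gives a
matching of size `|E|` avoiding `α`. The `|E|` edge-vertices meet every edge of `G₀[Π(S)]`
(as `β₁, β₂ ∉ Π(S)`), so `ν(G₀[Π(S)]) = |E|`. A core element has total value `|E|`, and the
matched pairs alone already carry at least `|E|`, so it vanishes at `α`. The indicator of the
edge-vertices lies in the core, which is therefore nonempty, and the infimum is `1`.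
-/

theorem Finset.exists_injOn_fiber_index {ι κ : Type*} [DecidableEq κ] (s : Finset ι)
    (c : ι → κ) :
    ∃ i : ι → ℕ, (∀ a ∈ s, i a < (s.filter fun b => c b = c a).card) ∧
      Set.InjOn (fun a => (c a, i a)) s := by
  classical
  refine ⟨fun a => {b ∈ s | c b = c a}.toList.idxOf a, fun a ha => ?_, fun a ha b hb hab => ?_⟩
  · rw [← Finset.length_toList]
    exact List.idxOf_lt_length_iff.2 (by simp [ha])
  · obtain ⟨hc, hi⟩ := Prod.mk.inj hab
    have hfiber : {x ∈ s | c x = c b} = {x ∈ s | c x = c a} := by rw [hc]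
    simp only [hfiber] at hi
    exact (List.idxOf_inj (by simpa using ha)).1 hi

namespace FinGraph

variable {α : Type*}

theorem card_le_nu {G : FinGraph α} {M : Finset (α × α)} (hM : G.IsMatching M) :
    M.card ≤ G.nu := by
  classical
  exact Finset.le_sup (Finset.mem_filter.2 ⟨Finset.mem_powerset.2 hM.1, hM⟩)

theorem nu_le_card_of_cover [DecidableEq α] {G : FinGraph α} {C : Finset α}
    (hC : ∀ f ∈ G.edges, f.1 ∈ C ∨ f.2 ∈ C) : G.nu ≤ C.card := by
  classical
  refine Finset.sup_le fun M hM => ?_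
  obtain ⟨hMG, hdisj⟩ := (Finset.mem_filter.1 hM).2
  refine Finset.card_le_card_of_injOn (fun f => if f.1 ∈ C then f.1 else f.2) ?_ ?_
  · intro f hf
    have := hC f (hMG hf)
    dsimp only
    split_ifs <;> tauto
  · intro f hf g hg hfg
    by_contra hne
    have := hdisj f hf g hg hne
    dsimp only at hfg
    split_ifs at hfg <;> tauto

theorem WF.induce [DecidableEq α] {G : FinGraph α} (hG : G.WF) (U : Finset α) :
    (G.induce U).WF := by
  intro f hf
  obtain ⟨hfG, hf1, hf2⟩ := Finset.mem_filter.1 hf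
  obtain ⟨h1, h2, hne⟩ := hG f hfG
  exact ⟨Finset.mem_inter.2 ⟨h1, hf1⟩, Finset.mem_inter.2 ⟨h2, hf2⟩, hne⟩

theorem eq_zero_of_mem_core_of_isMatching [DecidableEq α] {G : FinGraph α} (hG : G.WF)
    {M : Finset (α × α)} (hM : G.IsMatching M) (hMν : G.nu ≤ M.card) {y : α → ℝ}
    (hy : y ∈ G.core) {w : α} (hw : w ∈ G.verts) (hwM : ∀ f ∈ M, f.1 ≠ w ∧ f.2 ≠ w) :
    y w = 0 := by
  obtain ⟨hnonneg, hcover, hsum⟩ := hy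
  set T := M.biUnion fun f => {f.1, f.2}
  have hTG : T ⊆ G.verts := by
    simp only [T, Finset.biUnion_subset, Finset.insert_subset_iff, Finset.singleton_subset_iff]
    exact fun f hf => ⟨(hG f (hM.1 hf)).1, (hG f (hM.1 hf)).2.1⟩
  have hwT : w ∉ T := by
    simp only [T, Finset.mem_biUnion, Finset.mem_insert, Finset.mem_singleton, not_exists,
      not_and]
    exact fun f hf => by have := hwM f hf; tauto
  have hsumT : ∑ v ∈ T, y v = ∑ f ∈ M, (y f.1 + y f.2) := by
    refine (Finset.sum_biUnion fun f hf g hg hne => ?_).trans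
      (Finset.sum_congr rfl fun f hf => Finset.sum_pair (hG f (hM.1 hf)).2.2)
    have := hM.2 f hf g hg hne
    simp only [Function.onFun, Finset.disjoint_insert_left, Finset.disjoint_insert_right,
      Finset.disjoint_singleton, Finset.mem_insert, Finset.mem_singleton]
    tauto
  have hMT : (M.card : ℝ) ≤ ∑ v ∈ T, y v := by
    simpa [hsumT] using Finset.card_nsmul_le_sum M _ 1 fun f hf => hcover f (hM.1 hf)
  have hTw : ∑ v ∈ T, y v + y w ≤ ∑ v ∈ G.verts, y v := by
    rw [add_comm, ← Finset.sum_insert hwT]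
    exact Finset.sum_le_sum_of_subset_of_nonneg (Finset.insert_subset hw hTG)
      fun v hv _ => hnonneg v hv
  have hνM : (G.nu : ℝ) ≤ M.card := by exact_mod_cast hMν
  linarith [hnonneg w hw]

theorem indicator_one_mem_core {G : FinGraph α} {C : Finset α} (hCG : C ⊆ G.verts)
    (hC : ∀ f ∈ G.edges, f.1 ∈ C ∨ f.2 ∈ C) (hCν : C.card = G.nu) :
    (C : Set α).indicator 1 ∈ G.core := by
  have hnonneg (v : α) : 0 ≤ (C : Set α).indicator (1 : α → ℝ) v :=
    Set.indicator_nonneg (fun _ _ => zero_le_one) v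
  refine ⟨fun v _ => hnonneg v, fun f hf => ?_, ?_⟩
  · rcases hC f hf with h | h
    · rw [Set.indicator_of_mem (Finset.mem_coe.2 h), Pi.one_apply]
      linarith [hnonneg f.2]
    · rw [Set.indicator_of_mem (Finset.mem_coe.2 h) (1 : α → ℝ), Pi.one_apply]
      linarith [hnonneg f.1]
  · rw [Finset.sum_indicator_subset _ hCG, ← hCν]
    simp

end FinGraph

theorem IsVCover.exists_cover_fun {W : Type*} {E : Finset (Sym2 W)} {S : Finset W}
    (hS : IsVCover E S) : ∃ c : Sym2 W → W, ∀ e ∈ E, c e ∈ S ∧ c e ∈ e := by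
  have h (e : Sym2 W) : ∃ v : W, e ∈ E → v ∈ S ∧ v ∈ e := by
    by_cases he : e ∈ E
    · obtain ⟨v, hvS, hve⟩ := hS e he
      exact ⟨v, fun _ => ⟨hvS, hve⟩⟩
    · exact ⟨e.out.1, fun h => absurd h he⟩
  choose c hc using h
  exact ⟨c, hc⟩

section Reduction

variable {E : Finset (Sym2 V)} {S : Finset V}

theorem mem_redGraph_edges {f : RedVert V × RedVert V} :
    f ∈ (redGraph E).edges ↔
      (∃ e ∈ E, ∃ v ∈ e, ∃ j < degE E v, (redEdgeVert e, redCopy v j) = f) ∨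
      (∃ e ∈ E, (redAlpha V, redEdgeVert e) = f) ∨
      f = (redAlpha V, redBeta1 V) ∨ f = (redAlpha V, redBeta2 V) := by
  simp only [redGraph, Finset.mem_union, Finset.mem_biUnion, Finset.mem_image, Finset.mem_filter,
    Finset.mem_univ, true_and, Finset.mem_insert, Finset.mem_singleton, Finset.mem_range]
  exact or_assoc

theorem redGraph_wf (E : Finset (Sym2 V)) : (redGraph E).WF := by
  intro f hf
  rcases mem_redGraph_edges.1 hf with ⟨e, he, v, -, j, hj, rfl⟩ | ⟨e, he, rfl⟩ | rfl | rfl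
  · simp [redGraph, redEdgeVert, redCopy, he, hj]
  · simp [redGraph, redEdgeVert, redAlpha, he]
  all_goals simp [redGraph, redAlpha, redBeta1, redBeta2]

theorem redGraph_induce_edge_cover (E : Finset (Sym2 V)) (S : Finset V) :
    ∀ f ∈ ((redGraph E).induce (redPi E S)).edges,
      f.1 ∈ E.image redEdgeVert ∨ f.2 ∈ E.image redEdgeVert := by
  intro f hf
  obtain ⟨hf, -, hf2⟩ := Finset.mem_filter.1 hf
  rcases mem_redGraph_edges.1 hf with ⟨e, he, -, -, -, -, rfl⟩ | ⟨e, he, rfl⟩ | rfl | rfl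
  · exact Or.inl (Finset.mem_image_of_mem _ he)
  · exact Or.inr (Finset.mem_image_of_mem _ he)
  all_goals simp [redPi, redCopy, redEdgeVert, redAlpha, redBeta1, redBeta2] at hf2

theorem image_redEdgeVert_subset_induce_verts (E : Finset (Sym2 V)) (S : Finset V) :
    E.image redEdgeVert ⊆ ((redGraph E).induce (redPi E S)).verts := by
  intro w hw
  simp only [induce, redGraph, redPi, Finset.mem_inter, Finset.mem_union]
  exact ⟨Or.inl (Or.inr hw), Or.inl (Or.inr hw)⟩

theorem redAlpha_mem_induce_verts (E : Finset (Sym2 V)) (S : Finset V) :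
    redAlpha V ∈ ((redGraph E).induce (redPi E S)).verts := by
  simp [induce, redGraph, redPi]

theorem redEdgeVert_redCopy_mem_induce_edges {e : Sym2 V} {v : V} {j : ℕ} (he : e ∈ E)
    (hvS : v ∈ S) (hve : v ∈ e) (hj : j < degE E v) :
    (redEdgeVert e, redCopy v j) ∈ ((redGraph E).induce (redPi E S)).edges := by
  refine Finset.mem_filter.2 ⟨mem_redGraph_edges.2 (Or.inl ⟨e, he, v, hve, j, hj, rfl⟩), ?_, ?_⟩
  · simp only [redPi, Finset.mem_union]
    exact Or.inl (Or.inr (Finset.mem_image_of_mem _ he))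
  · simp only [redPi, Finset.mem_union, Finset.mem_biUnion]
    exact Or.inl (Or.inl ⟨v, hvS, Finset.mem_image_of_mem _ (Finset.mem_range.2 hj)⟩)

/-- Each edge `e` is matched to its own copy of a vertex of `S` covering it; a vertex `v` has
enough copies since it is chosen for at most `d_v` edges. -/
theorem exists_isMatching_redGraph_induce (hS : IsVCover E S) :
    ∃ M, ((redGraph E).induce (redPi E S)).IsMatching M ∧ M.card = E.card ∧
      ∀ f ∈ M, f.1 ≠ redAlpha V ∧ f.2 ≠ redAlpha V := by
  obtain ⟨c, hc⟩ := hS.exists_cover_fun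
  obtain ⟨i, hi, hinj⟩ := E.exists_injOn_fiber_index c
  have hdeg (e : Sym2 V) (he : e ∈ E) : i e < degE E (c e) :=
    (hi e he).trans_le <| Finset.card_le_card fun b hb => by
      obtain ⟨hbE, hcb⟩ := Finset.mem_filter.1 hb
      exact Finset.mem_filter.2 ⟨hbE, hcb ▸ (hc b hbE).2⟩
  let m : Sym2 V → RedVert V × RedVert V := fun e => (redEdgeVert e, redCopy (c e) (i e))
  have hm : Function.Injective m := fun a b h => by
    simpa [m, redEdgeVert] using congrArg Prod.fst h
  refine ⟨E.image m, ⟨?_, ?_⟩, Finset.card_image_of_injective _ hm, ?_⟩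
  · exact Finset.image_subset_iff.2 fun e he =>
      redEdgeVert_redCopy_mem_induce_edges he (hc e he).1 (hc e he).2 (hdeg e he)
  · simp only [Finset.mem_image]
    rintro _ ⟨a, ha, rfl⟩ _ ⟨b, hb, rfl⟩ hne
    have hab : a ≠ b := fun h => hne (h ▸ rfl)
    have hci : ¬(c a = c b ∧ i a = i b) := fun h => hab (hinj ha hb (Prod.ext h.1 h.2))
    simp only [m, redEdgeVert, redCopy, ne_eq, reduceCtorEq, not_false_eq_true, Sum.inr.injEq,
      Sum.inl.injEq, Prod.mk.injEq]
    exact ⟨hab, trivial, trivial, hci⟩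
  · simp [m, redAlpha, redEdgeVert, redCopy]

theorem nu_redGraph_induce (hS : IsVCover E S) :
    ((redGraph E).induce (redPi E S)).nu = E.card := by
  obtain ⟨M, hM, hMcard, -⟩ := exists_isMatching_redGraph_induce hS
  refine le_antisymm ?_ (hMcard ▸ card_le_nu hM)
  calc _ ≤ (E.image redEdgeVert).card := nu_le_card_of_cover (redGraph_induce_edge_cover E S)
    _ = E.card := Finset.card_image_of_injective _ (Sum.inr_injective.comp Sum.inl_injective)

end Reduction

theorem redGraph_core_alpha_of_vcover_general (E : Finset (Sym2 V))
    (S : Finset V) (hS : IsVCover E S) :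
    (∀ y ∈ ((redGraph E).induce (redPi E S)).core, y (redAlpha V) = 0) ∧
    sInf ((fun y : RedVert V → ℝ => 1 - y (redAlpha V)) ''
        ((redGraph E).induce (redPi E S)).core) = 1 := by
  obtain ⟨M, hM, hMcard, hαM⟩ := exists_isMatching_redGraph_induce hS
  have hα (y) (hy : y ∈ ((redGraph E).induce (redPi E S)).core) : y (redAlpha V) = 0 :=
    eq_zero_of_mem_core_of_isMatching ((redGraph_wf E).induce _) hM
      (by rw [nu_redGraph_induce hS, hMcard]) hy (redAlpha_mem_induce_verts E S) hαM
  have hcore : ((E.image redEdgeVert : Finset (RedVert V)) : Set (RedVert V)).indicator 1 ∈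
      ((redGraph E).induce (redPi E S)).core :=
    indicator_one_mem_core (image_redEdgeVert_subset_induce_verts E S)
      (redGraph_induce_edge_cover E S) <| by
        rw [nu_redGraph_induce hS]
        exact Finset.card_image_of_injective _ (Sum.inr_injective.comp Sum.inl_injective)
  have himage : (fun y : RedVert V → ℝ => 1 - y (redAlpha V)) ''
      ((redGraph E).induce (redPi E S)).core = {1} :=
    Set.eq_singleton_iff_unique_mem.2
      ⟨⟨_, hcore, by simp only [hα _ hcore, sub_zero]⟩, by rintro _ ⟨y, hy, rfl⟩; simp [hα y hy]⟩
  exact ⟨hα, by rw [himage, csInf_singleton]⟩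

/-- If `S ⊆ V` is a vertex cover of `G`, then every core element of the induced
subgraph `G₀[Π(S)]` satisfies `y_α = 0`; hence `min_{y ∈ core(G₀[Π(S)])} (1 - y_α) = 1`. -/
theorem redGraph_core_alpha_of_vcover (E : Finset (Sym2 V)) (hE : ∀ e ∈ E, ¬ e.IsDiag)
    (S : Finset V) (hS : IsVCover E S) :
    (∀ y ∈ ((redGraph E).induce (redPi E S)).core, y (redAlpha V) = 0) ∧
    sInf ((fun y : RedVert V → ℝ => 1 - y (redAlpha V)) ''
        ((redGraph E).induce (redPi E S)).core) = 1 :=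
  redGraph_core_alpha_of_vcover_general E S hS
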